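/- Let V₁ : ℝⁿ → ℝ be continuous, proper (sublevel sets compact), and nonnegative, and let ψ₁ : ℝⁿ → ℝ be continuous. Fix M > 0 and a > 0, and define A = {(x₁,x₂) ∈ ℝⁿ × ℝ : V₁(x₁) ≤ M, x₂ = ψ₁(x₁)}. For k ∈ ℕ, k ≥ 1, define V_k(x₁,x₂) = V₁(x₁) + k·(x₂ − ψ₁(x₁))². Then there exists k ≥ 1 such that the sublevel set {(x₁,x₂) : V_k(x₁,x₂) ≤ 1/k} is contained in the open a-neighborhood A + a·B₁ of A. -/

import Mathlib

/-! If `V₁ x₁ + k (x₂ - ψ₁ x₁)² ≤ 1/k` with `V₁ ≥ 0`, then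
`V₁ x₁ ≤ 1/k` and `|x₂ - ψ₁ x₁| ≤ 1/k`. Once `1/k < min M a`, the point `(x₁, ψ₁ x₁)`
lies in `A` at distance `|x₂ - ψ₁ x₁| < a` from `(x₁, x₂)`. -/

lemma le_one_div_of_add_mul_sq_le {v d k : ℝ} (hk : 0 < k)
    (h : v + k * d ^ 2 ≤ 1 / k) : v ≤ 1 / k := by
  nlinarith [mul_nonneg hk.le (sq_nonneg d)]

lemma abs_le_one_div_of_add_mul_sq_le {v d k : ℝ} (hv : 0 ≤ v) (hk : 0 < k)
    (h : v + k * d ^ 2 ≤ 1 / k) : |d| ≤ 1 / k := by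
  have hsq : d ^ 2 ≤ (1 / k) ^ 2 := by
    rw [div_pow, one_pow, sq k, ← div_div, le_div_iff₀ hk, mul_comm]
    linarith
  exact abs_le_of_sq_le_sq' hsq (by positivity) |> abs_le.mpr

theorem stmt_0_general (n : ℕ) (V₁ : (Fin n → ℝ) → ℝ) (ψ₁ : (Fin n → ℝ) → ℝ)
    (hV₁nonneg : ∀ x, 0 ≤ V₁ x)
    (M a : ℝ) (hM : 0 < M) (ha : 0 < a)
    (A : Set ((Fin n → ℝ) × ℝ))
    (hA : A = {p | V₁ p.1 ≤ M ∧ p.2 = ψ₁ p.1}) :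
    ∃ k : ℕ, 1 ≤ k ∧
      {p : (Fin n → ℝ) × ℝ | V₁ p.1 + (k : ℝ) * (p.2 - ψ₁ p.1) ^ 2 ≤ 1 / (k : ℝ)} ⊆
        {y | ∃ x ∈ A, dist y x < a} := by
  obtain ⟨k, hk⟩ := exists_nat_gt (max (1 / M) (1 / a))
  have hk_pos : (0 : ℝ) < k := (lt_max_of_lt_left (one_div_pos.mpr hM)).trans hk
  have hkM : 1 / (k : ℝ) < M := (one_div_lt hM hk_pos).mp ((le_max_left _ _).trans_lt hk)
  have hka : 1 / (k : ℝ) < a := (one_div_lt ha hk_pos).mp ((le_max_right _ _).trans_lt hk)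
  refine ⟨k, by exact_mod_cast hk_pos, fun p hp => ⟨(p.1, ψ₁ p.1), ?_, ?_⟩⟩
  · rw [hA]
    exact ⟨(le_one_div_of_add_mul_sq_le hk_pos hp).trans hkM.le, rfl⟩
  · calc dist p (p.1, ψ₁ p.1) = |p.2 - ψ₁ p.1| := dist_prod_same_left
      _ ≤ 1 / k := abs_le_one_div_of_add_mul_sq_le (hV₁nonneg p.1) hk_pos hp
      _ < a := hka

/-- there exists `k ≥ 1` such that the sublevel set
`{V_k ≤ 1/k}` of `V_k(x₁,x₂) = V₁(x₁) + k (x₂ - ψ₁ x₁)²` is contained in the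
open `a`-neighborhood of `A = {(x₁,x₂) : V₁ x₁ ≤ M, x₂ = ψ₁ x₁}`. -/
theorem stmt_0 (n : ℕ) (V₁ : (Fin n → ℝ) → ℝ) (ψ₁ : (Fin n → ℝ) → ℝ)
    (hV₁c : Continuous V₁) (hV₁proper : ∀ c : ℝ, IsCompact {x | V₁ x ≤ c})
    (hV₁nonneg : ∀ x, 0 ≤ V₁ x) (hψ₁ : Continuous ψ₁)
    (M a : ℝ) (hM : 0 < M) (ha : 0 < a)
    (A : Set ((Fin n → ℝ) × ℝ))
    (hA : A = {p | V₁ p.1 ≤ M ∧ p.2 = ψ₁ p.1}) :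
    ∃ k : ℕ, 1 ≤ k ∧
      {p : (Fin n → ℝ) × ℝ | V₁ p.1 + (k : ℝ) * (p.2 - ψ₁ p.1) ^ 2 ≤ 1 / (k : ℝ)} ⊆
        {y | ∃ x ∈ A, dist y x < a} :=
  stmt_0_general n V₁ ψ₁ hV₁nonneg M a hM ha A hA
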